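/- arXiv:1904.10454 — 2 statements merged into one kernel-verified Lean document; each statement's English description precedes it below -/
import Mathlib

section
/- Let V be a finite set, let G, Δ be subgroups of Sym(V) such that every element of Δ normalizes G, and let f ∈ Sym(V). Say that π ∈ Sym(V ⊕ V) preserves the matching M_f if for every v ∈ V there exists w ∈ V with π(inl(f v)) = inl(f w) and π(inr v) = inr w. Then for every δ ∈ Sym(V) the following are equivalent: (1) there exists π ∈ Δ_U preserving M_f with π(inr v) = inr(δ v) for all v ∈ V; (2) δ ∈ Δ and δ⁻¹(Gf)δ = Gf. In other words, the restriction to the second copy of V of the stabilizer of M_f inside Δ_U equals Norm_Δ(Gf). -/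
/-!
A permutation `π ∈ Δ_U` is `sumCongr (δ * g) δ`, and it preserves `M_f` exactly when
`δ * g * f = f * δ`, i.e. when `δ⁻¹ f δ = g f ∈ Gf`. Since `δ` normalizes `G`, conjugation by `δ`
maps the coset `Gf` onto the coset `G (δ⁻¹ f δ)`, which is `Gf` iff `δ⁻¹ f δ ∈ Gf`.
-/

open Equiv Subgroup

section CosetConjugation

variable {α : Type*} [Group α]

theorem mem_normalizer_iff_image_inv_conj_eq {S : Set α} {c : α} :
    c ∈ normalizer S ↔ (fun x => c⁻¹ * x * c) '' S = S := by
  have hconj : ⇑(MulAut.conj c⁻¹) = fun x => c⁻¹ * x * c := by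
    funext x; rw [MulAut.conj_apply, inv_inv]
  rw [← inv_mem_iff, mem_normalizer_iff_conj_image_eq, hconj]

theorem image_conj_rightCoset_eq_iff {H : Subgroup α} {c f : α}
    (hc : c ∈ normalizer (H : Set α)) :
    (fun x => c⁻¹ * x * c) '' {x | ∃ h ∈ H, x = h * f} = {x | ∃ h ∈ H, x = h * f} ↔
      ∃ g ∈ H, c⁻¹ * f * c = g * f := by
  constructor
  · intro hcoset
    have hf : c⁻¹ * f * c ∈ (fun x => c⁻¹ * x * c) '' {x | ∃ h ∈ H, x = h * f} :=
      ⟨f, ⟨1, H.one_mem, (one_mul f).symm⟩, rfl⟩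
    rwa [hcoset] at hf
  · rintro ⟨g, hg, hconj⟩
    have hH : ∀ h, h ∈ H ↔ c⁻¹ * h * c ∈ H := mem_normalizer_iff''.1 hc
    ext x
    constructor
    · rintro ⟨_, ⟨h, hh, rfl⟩, rfl⟩
      refine ⟨c⁻¹ * h * c * g, H.mul_mem ((hH h).1 hh) hg, ?_⟩
      calc c⁻¹ * (h * f) * c = c⁻¹ * h * c * (c⁻¹ * f * c) := by group
        _ = c⁻¹ * h * c * g * f := by rw [hconj]; simp only [mul_assoc]
    · rintro ⟨h, hh, rfl⟩
      have hh' : c * (h * g⁻¹) * c⁻¹ ∈ H :=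
        (hH _).2 (by convert H.mul_mem hh (H.inv_mem hg) using 1; group)
      refine ⟨c * (h * g⁻¹) * c⁻¹ * f, ⟨_, hh', rfl⟩, ?_⟩
      calc c⁻¹ * (c * (h * g⁻¹) * c⁻¹ * f) * c = h * g⁻¹ * (c⁻¹ * f * c) := by group
        _ = h * f := by rw [hconj]; group

end CosetConjugation

section SumPerm

variable {α β : Type*}

theorem Equiv.Perm.eq_sumCongr_of_apply {π : Perm (α ⊕ β)} {a : Perm α} {b : Perm β}
    (hl : ∀ v, π (Sum.inl v) = Sum.inl (a v)) (hr : ∀ v, π (Sum.inr v) = Sum.inr (b v)) :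
    π = Perm.sumCongr a b := by
  ext (v | v) <;> simp [hl, hr]

theorem Equiv.Perm.sumCongr_preserves_matching_iff (a b f : Perm α) :
    (∀ v, ∃ w, sumCongr a b (Sum.inl (f v)) = Sum.inl (f w) ∧ sumCongr a b (Sum.inr v) = Sum.inr w)
      ↔ a * f = f * b := by
  simp only [Perm.sumCongr_apply, Sum.map_inl, Sum.map_inr, Sum.inl.injEq, Sum.inr.injEq,
    exists_eq_right', Perm.ext_iff, Perm.mul_apply]

end SumPerm

theorem matching_stabilizer_eq_coset_normalizer_general {V : Type*}
    (G Δ : Subgroup (Equiv.Perm V)) (f : Equiv.Perm V)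
    (hnorm : ∀ δ ∈ Δ,
      (fun x => δ⁻¹ * x * δ) '' (G : Set (Equiv.Perm V)) = (G : Set (Equiv.Perm V))) :
    ∀ δ : Equiv.Perm V,
      (∃ π : Equiv.Perm (V ⊕ V),
        (∃ g ∈ G, ∃ δ' ∈ Δ,
          (∀ v : V, π (Sum.inl v) = Sum.inl (δ' (g v))) ∧
          (∀ v : V, π (Sum.inr v) = Sum.inr (δ' v))) ∧
        (∀ v : V, ∃ w : V,
          π (Sum.inl (f v)) = Sum.inl (f w) ∧ π (Sum.inr v) = Sum.inr w) ∧
        (∀ v : V, π (Sum.inr v) = Sum.inr (δ v)))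
      ↔ (δ ∈ Δ ∧
          (fun x => δ⁻¹ * x * δ) '' {x | ∃ g ∈ G, x = g * f} =
            {x | ∃ g ∈ G, x = g * f}) := by
  intro δ
  have hmatch (g : Perm V) : δ * g * f = f * δ ↔ δ⁻¹ * f * δ = g * f := by
    rw [mul_assoc δ⁻¹, inv_mul_eq_iff_eq_mul, mul_assoc, eq_comm]
  constructor
  · rintro ⟨π, ⟨g, hg, δ', hδ', hl, hr⟩, hM, hδ⟩
    obtain rfl : δ' = δ := Equiv.ext fun v => Sum.inr_injective ((hr v).symm.trans (hδ v))
    obtain rfl : π = Perm.sumCongr (δ' * g) δ' := Perm.eq_sumCongr_of_apply hl hr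
    have hconj := (hmatch g).1 ((Perm.sumCongr_preserves_matching_iff _ _ f).1 hM)
    exact ⟨hδ', (image_conj_rightCoset_eq_iff
      (mem_normalizer_iff_image_inv_conj_eq.2 (hnorm δ' hδ'))).2 ⟨g, hg, hconj⟩⟩
  · rintro ⟨hδ, hcoset⟩
    obtain ⟨g, hg, hconj⟩ := (image_conj_rightCoset_eq_iff
      (mem_normalizer_iff_image_inv_conj_eq.2 (hnorm δ hδ))).1 hcoset
    exact ⟨Perm.sumCongr (δ * g) δ, ⟨g, hg, δ, hδ, fun _ => rfl, fun _ => rfl⟩,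
      (Perm.sumCongr_preserves_matching_iff _ _ f).2 ((hmatch g).2 hconj), fun _ => rfl⟩

/-- The restriction to the second copy of `V` of the stabilizer of the matching
`M_f` inside `Δ_U` is exactly the normalizer `Norm_Δ(Gf)` of the coset `Gf` in `Δ`. -/
theorem matching_stabilizer_eq_coset_normalizer {V : Type*} [Fintype V]
    (G Δ : Subgroup (Equiv.Perm V)) (f : Equiv.Perm V)
    (hnorm : ∀ δ ∈ Δ,
      (fun x => δ⁻¹ * x * δ) '' (G : Set (Equiv.Perm V)) = (G : Set (Equiv.Perm V))) :
    ∀ δ : Equiv.Perm V,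
      (∃ π : Equiv.Perm (V ⊕ V),
        (∃ g ∈ G, ∃ δ' ∈ Δ,
          (∀ v : V, π (Sum.inl v) = Sum.inl (δ' (g v))) ∧
          (∀ v : V, π (Sum.inr v) = Sum.inr (δ' v))) ∧
        (∀ v : V, ∃ w : V,
          π (Sum.inl (f v)) = Sum.inl (f w) ∧ π (Sum.inr v) = Sum.inr w) ∧
        (∀ v : V, π (Sum.inr v) = Sum.inr (δ v)))
      ↔ (δ ∈ Δ ∧
          (fun x => δ⁻¹ * x * δ) '' {x | ∃ g ∈ G, x = g * f} =
            {x | ∃ g ∈ G, x = g * f}) :=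
  matching_stabilizer_eq_coset_normalizer_general G Δ f hnorm
end

section
/- Let R : ℕ → ℕ → ℕ satisfy: (i) R(m, n) ≤ 1 whenever n ≤ 1; and (ii) for all m ≥ 1 and n ≥ 2, either there exist n₁ ≥ 1 and n₂ ≥ 1 with n₁ + n₂ = n and R(m, n) ≤ 1 + R(m, n₁) + R(m, n₂), or m = n and R(m, n) ≤ 1 + 2^n · R(⌈n/2⌉, n). Then R(m, n) ≤ 2^(6m) · n² for all m ≥ 1 and n ≥ 1. -/
/-!
Induct on `m`, and for fixed `m` on `n`. A split step is absorbed by the bound `C n²` because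
`(n₁ + n₂)² = n₁² + n₂² + 2 n₁ n₂` leaves room `C · 2 n₁ n₂ ≥ 1` for the extra call. A halving
step with `m = n ≥ 2` costs at most `1 + 2ⁿ · 2^(3n+3) n² ≤ 2^(4n+4) n²`, and `4n + 4 ≤ 6n`.
-/

lemma one_add_mul_sq_add_mul_sq_le {C a b : ℕ} (hC : 1 ≤ C) (ha : 1 ≤ a) (hb : 1 ≤ b) :
    1 + C * a ^ 2 + C * b ^ 2 ≤ C * (a + b) ^ 2 := by
  have hcross : 1 ≤ C * (2 * a * b) := Nat.one_le_iff_ne_zero.mpr (by positivity)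
  have hexpand : C * (a + b) ^ 2 = C * a ^ 2 + C * b ^ 2 + C * (2 * a * b) := by ring
  omega

lemma one_add_two_pow_mul_two_pow_half_le {n : ℕ} (hn : 2 ≤ n) :
    1 + 2 ^ n * (2 ^ (6 * ((n + 1) / 2)) * n ^ 2) ≤ 2 ^ (6 * n) * n ^ 2 := by
  have hpos : 1 ≤ 2 ^ (4 * n + 3) * n ^ 2 := Nat.one_le_iff_ne_zero.mpr (by positivity)
  calc 1 + 2 ^ n * (2 ^ (6 * ((n + 1) / 2)) * n ^ 2)
      = 1 + 2 ^ (n + 6 * ((n + 1) / 2)) * n ^ 2 := by rw [pow_add, mul_assoc]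
    _ ≤ 1 + 2 ^ (4 * n + 3) * n ^ 2 := by gcongr 1 + 2 ^ ?_ * n ^ 2 <;> omega
    _ ≤ 2 ^ (4 * n + 4) * n ^ 2 := by rw [pow_succ 2 (4 * n + 3), mul_right_comm]; omega
    _ ≤ 2 ^ (6 * n) * n ^ 2 := by gcongr <;> omega

/-- The recurrence bound for the number of recursive calls of the
group-canonization algorithm: `R(m, n) ≤ 2^(6m) · n²`. -/
theorem recursion_bound (R : ℕ → ℕ → ℕ)
    (h1 : ∀ m n, n ≤ 1 → R m n ≤ 1)
    (h2 : ∀ m n, 1 ≤ m → 2 ≤ n →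
      (∃ n₁ n₂, 1 ≤ n₁ ∧ 1 ≤ n₂ ∧ n₁ + n₂ = n ∧ R m n ≤ 1 + R m n₁ + R m n₂) ∨
      (m = n ∧ R m n ≤ 1 + 2 ^ n * R ((n + 1) / 2) n)) :
    ∀ m n, 1 ≤ m → 1 ≤ n → R m n ≤ 2 ^ (6 * m) * n ^ 2 := by
  intro m
  induction m using Nat.strong_induction_on with
  | _ m ihm =>
  intro n
  induction n using Nat.strong_induction_on with
  | _ n ihn =>
  intro hm hn
  rcases Nat.lt_or_ge n 2 with hn1 | hn2
  · calc R m n ≤ 1 := h1 m n (by omega)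
      _ ≤ 2 ^ (6 * m) * n ^ 2 := Nat.one_le_iff_ne_zero.mpr (by positivity)
  rcases h2 m n hm hn2 with ⟨n₁, n₂, hn₁, hn₂, rfl, hR⟩ | ⟨rfl, hR⟩
  · calc R m (n₁ + n₂) ≤ 1 + R m n₁ + R m n₂ := hR
      _ ≤ 1 + 2 ^ (6 * m) * n₁ ^ 2 + 2 ^ (6 * m) * n₂ ^ 2 := by
          gcongr
          · exact ihn n₁ (by omega) hm hn₁
          · exact ihn n₂ (by omega) hm hn₂
      _ ≤ 2 ^ (6 * m) * (n₁ + n₂) ^ 2 := one_add_mul_sq_add_mul_sq_le Nat.one_le_two_pow hn₁ hn₂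
  · calc R m m ≤ 1 + 2 ^ m * R ((m + 1) / 2) m := hR
      _ ≤ 1 + 2 ^ m * (2 ^ (6 * ((m + 1) / 2)) * m ^ 2) := by
          gcongr
          exact ihm _ (by omega) m (by omega) hn
      _ ≤ 2 ^ (6 * m) * m ^ 2 := one_add_two_pow_mul_two_pow_half_le hn2
end
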